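/- Let X, Z ∈ ℝ^{d×r} satisfy ‖XXᵀ − ZZᵀ‖_F ≤ ρ·λ_min(ZᵀZ) with ρ < 1/2, and let f(X) = ‖XXᵀ − ZZᵀ‖_F². Then (‖∇f(X)‖_X*)² ≤ 16·f(X), where ‖V‖_X* = ‖V(XᵀX)^{−1/2}‖_F. -/

import Mathlib

/-!
With `E = XXᵀ − ZZᵀ` and `S = (XᵀX)^{1/2}`, the dual norm of `∇f(X) = 4EX` is `4‖E X S⁻¹‖_F`.
When `XᵀX` is invertible, `M = X S⁻¹` has orthonormal columns (`MᵀM = S⁻¹ XᵀX S⁻¹ = 1`), so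
`1 − MMᵀ` is an orthogonal projection and `‖E‖_F² − ‖EM‖_F² = ‖E(1 − MMᵀ)‖_F² ≥ 0`.
Hence `(‖∇f(X)‖_X*)² ≤ 16‖E‖_F² = 16 f(X)`.
-/

open Matrix BigOperators

noncomputable section

/-- Frobenius norm of a real matrix. -/
def frob {m n : ℕ} (A : Matrix (Fin m) (Fin n) ℝ) : ℝ :=
  Real.sqrt (∑ i, ∑ j, (A i j) ^ 2)

/-- Trace inner product `⟨A,B⟩ = tr(AᵀB)`. -/
def mip {m n : ℕ} (A B : Matrix (Fin m) (Fin n) ℝ) : ℝ := (Aᵀ * B).trace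

open Classical in
/-- Smallest eigenvalue of a Hermitian matrix (junk value 0 otherwise). -/
def lammin {n : ℕ} (M : Matrix (Fin n) (Fin n) ℝ) : ℝ :=
  if h : M.IsHermitian then ⨅ i, h.eigenvalues i else 0

open scoped ComplexOrder in
/-- The positive semidefinite square root of a positive semidefinite matrix (the definition
that Mathlib's `Matrix.PosSemidef.sqrt` had in the older library; it has since been removed). -/
def Matrix.PosSemidef.sqrt {n : Type*} [Fintype n] [DecidableEq n] {𝕜 : Type*} [RCLike 𝕜]
    {A : Matrix n n 𝕜} (hA : A.PosSemidef) : Matrix n n 𝕜 :=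
  (hA.1.eigenvectorUnitary : Matrix n n 𝕜) *
  diagonal (((↑) : ℝ → 𝕜) ∘ Real.sqrt ∘ hA.1.eigenvalues) *
  (star hA.1.eigenvectorUnitary : Matrix n n 𝕜)

/-- Local norm `‖V‖_X = ‖V (XᵀX)^{1/2}‖_F`. -/
def locNorm {d r : ℕ} (X V : Matrix (Fin d) (Fin r) ℝ) : ℝ :=
  frob (V * (Matrix.posSemidef_conjTranspose_mul_self X).sqrt)

/-- Dual local norm `‖V‖_X* = ‖V (XᵀX)^{-1/2}‖_F`. -/
def dualNorm {d r : ℕ} (X V : Matrix (Fin d) (Fin r) ℝ) : ℝ :=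
  frob (V * ((Matrix.posSemidef_conjTranspose_mul_self X).sqrt)⁻¹)

/-- Leverage score / coherence `g_k(X) = e_kᵀ X (XᵀX)⁻¹ Xᵀ e_k`. -/
def lev {d r : ℕ} (k : Fin d) (X : Matrix (Fin d) (Fin r) ℝ) : ℝ :=
  (X * (Xᴴ * X)⁻¹ * Xᴴ) k k

/-- Gradient of the leverage score `∇g_k(X)`. -/
def levGrad {d r : ℕ} (k : Fin d) (X : Matrix (Fin d) (Fin r) ℝ) :
    Matrix (Fin d) (Fin r) ℝ :=
  (2 : ℝ) • ((1 - X * (Xᴴ * X)⁻¹ * Xᴴ) * Matrix.single k k (1 : ℝ) * X * (Xᴴ * X)⁻¹)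

/-- Stochastic gradient sample `SG(X)` for the index pair `(i,j)`. -/
def SG {d r : ℕ} (X Z : Matrix (Fin d) (Fin r) ℝ) (i j : Fin d) :
    Matrix (Fin d) (Fin r) ℝ :=
  (2 * (d : ℝ) ^ 2 * ((X * Xᴴ - Z * Zᴴ) i j)) •
    ((Matrix.single i j (1 : ℝ) + Matrix.single j i (1 : ℝ)) * X)

section PosSemidefSqrt

open scoped ComplexOrder

variable {n 𝕜 : Type*} [Fintype n] [DecidableEq n] [RCLike 𝕜] {A : Matrix n n 𝕜}

lemma Matrix.PosSemidef.sqrt_isHermitian (hA : A.PosSemidef) : hA.sqrt.IsHermitian := by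
  unfold Matrix.PosSemidef.sqrt
  rw [star_eq_conjTranspose]
  exact isHermitian_mul_mul_conjTranspose _ (isHermitian_diagonal_of_self_adjoint _
    (by ext i; simp))

lemma Matrix.PosSemidef.sqrt_mul_self (hA : A.PosSemidef) : hA.sqrt * hA.sqrt = A := by
  have hUU : star (hA.1.eigenvectorUnitary : Matrix n n 𝕜) * hA.1.eigenvectorUnitary = 1 :=
    Unitary.coe_star_mul_self _
  have hD : diagonal (((↑) : ℝ → 𝕜) ∘ Real.sqrt ∘ hA.1.eigenvalues) *
      diagonal (((↑) : ℝ → 𝕜) ∘ Real.sqrt ∘ hA.1.eigenvalues) =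
      diagonal (((↑) : ℝ → 𝕜) ∘ hA.1.eigenvalues) := by
    rw [diagonal_mul_diagonal]
    congr 1
    funext i
    simp [← RCLike.ofReal_mul, Real.mul_self_sqrt (hA.eigenvalues_nonneg i)]
  conv_rhs => rw [hA.1.spectral_theorem, Unitary.conjStarAlgAut_apply, ← hD]
  simp only [Matrix.PosSemidef.sqrt, Matrix.mul_assoc]
  rw [← Matrix.mul_assoc (star _) _ (_ * star _), hUU, Matrix.one_mul]

end PosSemidefSqrt

section Frobenius

variable {m n k : ℕ}

lemma frob_nonneg (A : Matrix (Fin m) (Fin n) ℝ) : 0 ≤ frob A := Real.sqrt_nonneg _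

lemma frob_sq (A : Matrix (Fin m) (Fin n) ℝ) : frob A ^ 2 = (Aᴴ * A).trace := by
  rw [frob, Real.sq_sqrt (by positivity)]
  simp only [trace, diag, mul_apply, conjTranspose_apply, star_trivial, ← sq]
  exact Finset.sum_comm

lemma frob_smul (c : ℝ) (A : Matrix (Fin m) (Fin n) ℝ) : frob (c • A) = |c| * frob A := by
  simp only [frob, Matrix.smul_apply, smul_eq_mul, mul_pow, ← Finset.mul_sum]
  rw [Real.sqrt_mul (sq_nonneg c), Real.sqrt_sq_eq_abs]

lemma frob_mul_le_of_conjTranspose_mul_self_eq_one (E : Matrix (Fin m) (Fin n) ℝ)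
    {M : Matrix (Fin n) (Fin k) ℝ} (hM : Mᴴ * M = 1) : frob (E * M) ≤ frob E := by
  set Q : Matrix (Fin n) (Fin n) ℝ := 1 - M * Mᴴ
  have hQ : Qᴴ * Q = Q := by
    simp only [Q, conjTranspose_sub, conjTranspose_one, conjTranspose_mul,
      conjTranspose_conjTranspose, Matrix.sub_mul, Matrix.mul_sub, Matrix.one_mul,
      Matrix.mul_one, Matrix.mul_assoc, ← Matrix.mul_assoc Mᴴ M, hM]
    abel
  have hdefect :
      ((E * Qᴴ)ᴴ * (E * Qᴴ)).trace = (Eᴴ * E).trace - ((E * M)ᴴ * (E * M)).trace :=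
    calc ((E * Qᴴ)ᴴ * (E * Qᴴ)).trace = (Qᴴ * Q * (Eᴴ * E)).trace := by
          rw [conjTranspose_mul, conjTranspose_conjTranspose, ← Matrix.mul_assoc,
            trace_mul_comm]
          simp only [Matrix.mul_assoc]
      _ = (Eᴴ * E).trace - (M * Mᴴ * (Eᴴ * E)).trace := by
          rw [hQ, Matrix.sub_mul, Matrix.one_mul, trace_sub]
      _ = (Eᴴ * E).trace - ((E * M)ᴴ * (E * M)).trace := by
          rw [conjTranspose_mul, Matrix.mul_assoc, trace_mul_comm M]
          simp only [Matrix.mul_assoc]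
  have hsq : frob (E * M) ^ 2 ≤ frob E ^ 2 := by
    rw [frob_sq, frob_sq, ← sub_nonneg, ← hdefect]
    exact (posSemidef_conjTranspose_mul_self _).trace_nonneg
  exact (pow_le_pow_iff_left₀ (frob_nonneg _) (frob_nonneg _) two_ne_zero).mp hsq

end Frobenius

open scoped ComplexOrder in
lemma conjTranspose_mul_self_mul_sqrt_inv {m n 𝕜 : Type*} [Fintype m] [Fintype n]
    [DecidableEq n] [RCLike 𝕜] (X : Matrix m n 𝕜) (hX : IsUnit (Xᴴ * X).det) :
    (X * (posSemidef_conjTranspose_mul_self X).sqrt⁻¹)ᴴ *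
      (X * (posSemidef_conjTranspose_mul_self X).sqrt⁻¹) = 1 := by
  set S := (posSemidef_conjTranspose_mul_self X).sqrt
  have hSS : S * S = Xᴴ * X := PosSemidef.sqrt_mul_self _
  have hSh : Sᴴ = S := (PosSemidef.sqrt_isHermitian _).eq
  have hS : IsUnit S.det := by
    rw [← hSS, det_mul] at hX
    exact isUnit_of_mul_isUnit_left hX
  calc (X * S⁻¹)ᴴ * (X * S⁻¹) = S⁻¹ * (S * S) * S⁻¹ := by
        rw [conjTranspose_mul, conjTranspose_nonsing_inv, hSh, hSS]
        simp only [Matrix.mul_assoc]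
    _ = 1 := by
        rw [← Matrix.mul_assoc, nonsing_inv_mul _ hS, Matrix.one_mul, mul_nonsing_inv _ hS]

lemma frob_mul_mul_sqrt_inv_le {m d r : ℕ} (E : Matrix (Fin m) (Fin d) ℝ)
    (X : Matrix (Fin d) (Fin r) ℝ) :
    frob (E * (X * (posSemidef_conjTranspose_mul_self X).sqrt⁻¹)) ≤ frob E := by
  by_cases hX : IsUnit (Xᴴ * X).det
  · exact frob_mul_le_of_conjTranspose_mul_self_eq_one E
      (conjTranspose_mul_self_mul_sqrt_inv X hX)
  · -- for singular `XᴴX` the square root is singular too, and `⁻¹` returns the junk value `0`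
    have hS : ¬IsUnit (posSemidef_conjTranspose_mul_self X).sqrt.det := fun hS => by
      rw [← PosSemidef.sqrt_mul_self (posSemidef_conjTranspose_mul_self X), det_mul] at hX
      exact hX (hS.mul hS)
    rw [nonsing_inv_apply_not_isUnit _ hS, Matrix.mul_zero, Matrix.mul_zero]
    simp [frob]

theorem grad_dualNorm_upper_general {d r : ℕ} (X Z : Matrix (Fin d) (Fin r) ℝ) :
    dualNorm X ((4 : ℝ) • ((X * Xᴴ - Z * Zᴴ) * X)) ^ 2
      ≤ 16 * frob (X * Xᴴ - Z * Zᴴ) ^ 2 := by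
  set E := X * Xᴴ - Z * Zᴴ
  have hdual : dualNorm X ((4 : ℝ) • (E * X)) =
      4 * frob (E * (X * (posSemidef_conjTranspose_mul_self X).sqrt⁻¹)) := by
    rw [dualNorm, Matrix.smul_mul, Matrix.mul_assoc, frob_smul, abs_of_pos four_pos]
  rw [hdual]
  calc (4 * frob (E * (X * (posSemidef_conjTranspose_mul_self X).sqrt⁻¹))) ^ 2
      ≤ (4 * frob E) ^ 2 := by
        gcongr
        · exact mul_nonneg zero_le_four (frob_nonneg _)
        · exact frob_mul_mul_sqrt_inv_le E X
    _ = 16 * frob E ^ 2 := by ring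

/-- Upper bound on the dual local norm of the gradient: `(‖∇f(X)‖_X*)² ≤ 16 f(X)`. -/
theorem grad_dualNorm_upper {d r : ℕ} (X Z : Matrix (Fin d) (Fin r) ℝ) (ρ : ℝ)
    (hρ : ρ < 1 / 2)
    (h : frob (X * Xᴴ - Z * Zᴴ) ≤ ρ * lammin (Zᴴ * Z)) :
    dualNorm X ((4 : ℝ) • ((X * Xᴴ - Z * Zᴴ) * X)) ^ 2
      ≤ 16 * frob (X * Xᴴ - Z * Zᴴ) ^ 2 :=
  grad_dualNorm_upper_general X Z
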